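/- arXiv:1002.0874 — 2 statements merged into one kernel-verified Lean document; each statement's English description precedes it below -/
import Mathlib

section
/- In a maximal dense pattern x (w.r.t. string s and density threshold ρ), every internal solid block is a maximal solid block of s: if b = x[i..j] is a solid block with x[i-1] = x[j+1] = ∘, then b cannot be extended by a solid character on either side without decreasing its frequency in s. -/
/-- Number of don't care characters (`none`) in a pattern. -/
def dc {α : Type*} (x : List (Option α)) : ℕ := (x.filter Option.isNone).length

/-- Density of a pattern: 1 - dc(x)/|x|. -/
def density {α : Type*} (x : List (Option α)) : ℚ := 1 - (dc x : ℚ) / (x.length : ℚ)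

/-- A pattern is dense w.r.t. threshold ρ if its density is at least ρ. -/
def IsDense {α : Type*} (ρ : ℚ) (x : List (Option α)) : Prop := ρ ≤ density x

/-- Pattern x occurs in pattern y at position ℓ. -/
def occursAt {α : Type*} (x y : List (Option α)) (ℓ : ℕ) : Prop :=
  ℓ + x.length ≤ y.length ∧
    ∀ i < x.length, x.getD i none = none ∨ x.getD i none = y.getD (ℓ + i) none

/-- Frequency of pattern x in string s. -/
noncomputable def freq {α : Type*} (x : List (Option α)) (s : List α) : ℕ :=
  {ℓ | occursAt x (s.map some) ℓ}.ncard

/-- Pattern y contains pattern x iff x occurs in y at some position. -/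
def Contains {α : Type*} (y x : List (Option α)) : Prop := ∃ ℓ, occursAt x y ℓ

/-- y subsumes x in s iff y contains x and they have the same frequency in s. -/
def Subsumes {α : Type*} (s : List α) (y x : List (Option α)) : Prop :=
  Contains y x ∧ freq y s = freq x s

/-- x is a maximal dense pattern in s: dense, and not subsumed by any other dense
pattern. -/
def MaximalDense {α : Type*} (s : List α) (ρ : ℚ) (x : List (Option α)) : Prop :=
  IsDense ρ x ∧ ∀ y, IsDense ρ y → Subsumes s y x → y = x

/-! Every occurrence of `x` at `ℓ` puts an occurrence of the block `b` at `ℓ + i`. Since the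
occurrences of `b c` are among those of `b`, equal frequencies mean that every occurrence of `b`
is followed by `c`, so the don't care at position `j + 1` of `x` always faces `c` in `s`.
Filling it with `c` gives a pattern that is at least as dense, contains `x` and has exactly the
same occurrences, contradicting maximality of `x`. The left extension is symmetric. -/

section Occurrences

variable {α : Type*}

theorem occursAt_trans {u x t : List (Option α)} {i ℓ : ℕ} (hu : occursAt u x i)
    (hx : occursAt x t ℓ) : occursAt u t (ℓ + i) := by
  obtain ⟨hu_len, hu⟩ := hu
  obtain ⟨hx_len, hx⟩ := hx
  refine ⟨by omega, fun k hk => ?_⟩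
  rcases hu k hk with h | h
  · exact Or.inl h
  rcases hx (i + k) (by omega) with h' | h'
  · exact Or.inl (h.trans h')
  · exact Or.inr (by rw [h, h', Nat.add_assoc])

theorem occursAt_take_drop (x : List (Option α)) {i : ℕ} (n : ℕ) (hi : i ≤ x.length) :
    occursAt ((x.drop i).take n) x i := by
  refine ⟨by simp only [List.length_take, List.length_drop]; omega, fun k hk => Or.inr ?_⟩
  simp only [List.length_take, List.length_drop] at hk
  simp [List.getD_eq_getElem?_getD, show k < n by omega]

theorem occursAt_append_left (u v : List (Option α)) : occursAt u (u ++ v) 0 :=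
  ⟨by simp, fun k hk => Or.inr (by rw [Nat.zero_add, List.getD_append _ _ _ _ hk])⟩

theorem occursAt_append_right (u v : List (Option α)) : occursAt v (u ++ v) u.length :=
  ⟨by simp, fun k _ => Or.inr (by rw [List.getD_append_right _ _ _ _ (by omega)]; simp)⟩

theorem occursAt.of_append_left {u v t : List (Option α)} {ℓ : ℕ} (h : occursAt (u ++ v) t ℓ) :
    occursAt u t ℓ :=
  occursAt_trans (occursAt_append_left u v) h

theorem occursAt.of_cons {a : Option α} {u t : List (Option α)} {ℓ : ℕ}
    (h : occursAt (a :: u) t ℓ) : occursAt u t (ℓ + 1) :=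
  occursAt_trans (occursAt_append_right [a] u) h

theorem occursAt.getD_eq_some {x t : List (Option α)} {ℓ k : ℕ} {c : α} (h : occursAt x t ℓ)
    (hk : x.getD k none = some c) : t.getD (ℓ + k) none = some c := by
  have hlt : k < x.length := by
    by_contra! hle
    rw [List.getD_eq_default _ _ hle] at hk
    exact nomatch hk
  rcases h.2 k hlt with h' | h' <;> rw [hk] at h'
  · exact nomatch h'
  · exact h'.symm

theorem finite_setOf_occursAt (x t : List (Option α)) : {ℓ | occursAt x t ℓ}.Finite :=
  (Set.finite_Iic t.length).subset fun _ h => (Nat.le_add_right _ _).trans h.1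

end Occurrences

section Frequency

variable {α : Type*}

theorem setOf_occursAt_append_singleton_subset (u : List (Option α)) (a : Option α)
    (t : List (Option α)) :
    {ℓ | occursAt (u ++ [a]) t ℓ} ⊆ {ℓ | occursAt u t ℓ} :=
  fun _ h => h.of_append_left

theorem image_setOf_occursAt_cons_subset (a : Option α) (u t : List (Option α)) :
    (· + 1) '' {ℓ | occursAt (a :: u) t ℓ} ⊆ {ℓ | occursAt u t ℓ} := by
  rintro _ ⟨ℓ, h, rfl⟩
  exact h.of_cons

theorem freq_append_singleton_le (u : List (Option α)) (a : Option α) (s : List α) :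
    freq (u ++ [a]) s ≤ freq u s :=
  Set.ncard_le_ncard (setOf_occursAt_append_singleton_subset u a _) (finite_setOf_occursAt _ _)

theorem freq_cons_le (a : Option α) (u : List (Option α)) (s : List α) :
    freq (a :: u) s ≤ freq u s := by
  rw [freq, ← Set.ncard_image_of_injective _ (add_left_injective 1)]
  exact Set.ncard_le_ncard (image_setOf_occursAt_cons_subset a u _) (finite_setOf_occursAt _ _)

theorem occursAt.getD_of_freq_append_singleton_eq {u : List (Option α)} {s : List α} {c : α}
    {m : ℕ} (h : freq (u ++ [some c]) s = freq u s) (hm : occursAt u (s.map some) m) :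
    (s.map some).getD (m + u.length) none = some c := by
  have heq := Set.eq_of_subset_of_ncard_le (setOf_occursAt_append_singleton_subset u _ _) h.ge
    (finite_setOf_occursAt _ _)
  have hm' : m ∈ {ℓ | occursAt (u ++ [some c]) (s.map some) ℓ} := heq ▸ hm
  exact hm'.getD_eq_some (by simp)

theorem occursAt.getD_of_freq_cons_eq {u : List (Option α)} {s : List α} {c : α} {m : ℕ}
    (h : freq (some c :: u) s = freq u s) (hm : occursAt u (s.map some) (m + 1)) :
    (s.map some).getD m none = some c := by
  have heq := Set.eq_of_subset_of_ncard_le (image_setOf_occursAt_cons_subset (some c) u _)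
    (by rw [Set.ncard_image_of_injective _ (add_left_injective 1)]; exact h.ge)
    (finite_setOf_occursAt _ _)
  obtain ⟨ℓ, hℓ, hℓm⟩ : m + 1 ∈ (· + 1) '' {ℓ | occursAt (some c :: u) (s.map some) ℓ} :=
    heq ▸ hm
  obtain rfl : ℓ = m := Nat.succ_injective hℓm
  simpa using hℓ.getD_eq_some (k := 0) rfl

end Frequency

theorem List.getD_set_self {β : Type*} {l : List β} {p : ℕ} (a d : β) (hp : p < l.length) :
    (l.set p a).getD p d = a := by
  simp [List.getD_eq_getElem?_getD, hp]

theorem List.getD_set_ne {β : Type*} {l : List β} {p k : ℕ} (a d : β) (hk : k ≠ p) :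
    (l.set p a).getD k d = l.getD k d := by
  simp [List.getD_eq_getElem?_getD, Ne.symm hk]

section Filling

variable {α : Type*}

theorem dc_set_some_le (x : List (Option α)) (p : ℕ) (c : α) : dc (x.set p (some c)) ≤ dc x := by
  rcases lt_or_ge p x.length with hp | hp
  · simp only [dc, ← List.countP_eq_length_filter, List.countP_set hp, Option.isNone_some,
      Bool.false_eq_true, if_false, Nat.add_zero]
    exact Nat.sub_le _ _
  · rw [List.set_eq_of_length_le hp]

theorem density_le_density_set_some (x : List (Option α)) (p : ℕ) (c : α) :
    density x ≤ density (x.set p (some c)) := by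
  unfold density
  rw [List.length_set]
  gcongr
  exact_mod_cast dc_set_some_le x p c

theorem occursAt_set_of_getD_eq_none {x : List (Option α)} {p : ℕ}
    (hnone : x.getD p none = none) (a : Option α) : occursAt x (x.set p a) 0 := by
  refine ⟨by simp, fun k _ => ?_⟩
  rcases eq_or_ne k p with rfl | hk
  · exact Or.inl hnone
  · exact Or.inr (by rw [Nat.zero_add, List.getD_set_ne a none hk])

theorem occursAt_set_some_iff {x t : List (Option α)} {p ℓ : ℕ} {c : α}
    (hnone : x.getD p none = none)
    (hfill : ∀ ℓ, occursAt x t ℓ → t.getD (ℓ + p) none = some c) :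
    occursAt (x.set p (some c)) t ℓ ↔ occursAt x t ℓ := by
  rw [occursAt, occursAt, List.length_set]
  refine ⟨fun ⟨hlen, hocc⟩ => ⟨hlen, fun k hk => ?_⟩, fun hℓ => ⟨hℓ.1, fun k hk => ?_⟩⟩
  · rcases eq_or_ne k p with rfl | hkp
    · exact Or.inl hnone
    · simpa only [List.getD_set_ne _ _ hkp] using hocc k hk
  · rcases eq_or_ne k p with rfl | hkp
    · right
      rw [hfill ℓ hℓ, List.getD_set_self _ _ hk]
    · simpa only [List.getD_set_ne _ _ hkp] using hℓ.2 k hk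

theorem MaximalDense.not_forall_getD_eq_some {s : List α} {ρ : ℚ} {x : List (Option α)}
    (hx : MaximalDense s ρ x) {p : ℕ} (hp : p < x.length) (hnone : x.getD p none = none)
    (c : α) :
    ¬ ∀ ℓ, occursAt x (s.map some) ℓ → (s.map some).getD (ℓ + p) none = some c := by
  intro hfill
  have hsame : x.set p (some c) = x := by
    refine hx.2 _ (hx.1.trans (density_le_density_set_some x p c))
      ⟨⟨0, occursAt_set_of_getD_eq_none hnone _⟩, ?_⟩
    simp only [freq, occursAt_set_some_iff hnone hfill]
  have hfilled := List.getD_set_self (some c) none hp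
  rw [hsame, hnone] at hfilled
  exact nomatch hfilled

end Filling

theorem internal_solid_block_maximal_general {α : Type*} (s : List α) (ρ : ℚ)
    (x : List (Option α)) (hx : MaximalDense s ρ x)
    (b : List α) (i j : ℕ) (hi : 1 ≤ i) (hij : i ≤ j) (hj : j + 1 < x.length)
    (hblock : (x.drop i).take (j + 1 - i) = b.map some)
    (hleft : x.getD (i - 1) none = none) (hright : x.getD (j + 1) none = none) :
    ∀ c : α,
      freq (b.map some ++ [some c]) s < freq (b.map some) s ∧
      freq (some c :: b.map some) s < freq (b.map some) s := by
  intro c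
  have hb_len : (b.map some).length = j + 1 - i := by
    rw [← hblock, List.length_take, List.length_drop]
    omega
  have hb_occ : ∀ ℓ, occursAt x (s.map some) ℓ → occursAt (b.map some) (s.map some) (ℓ + i) :=
    fun ℓ hℓ => occursAt_trans (hblock ▸ occursAt_take_drop x _ (by omega)) hℓ
  refine ⟨(freq_append_singleton_le _ _ s).lt_of_ne fun h => ?_,
    (freq_cons_le _ _ s).lt_of_ne fun h => ?_⟩
  · refine hx.not_forall_getD_eq_some hj hright c fun ℓ hℓ => ?_
    have := (hb_occ ℓ hℓ).getD_of_freq_append_singleton_eq h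
    rwa [hb_len, Nat.add_assoc, show i + (j + 1 - i) = j + 1 by omega] at this
  · refine hx.not_forall_getD_eq_some (p := i - 1) (by omega) hleft c fun ℓ hℓ => ?_
    refine occursAt.getD_of_freq_cons_eq h ?_
    rw [Nat.add_assoc, Nat.sub_add_cancel hi]
    exact hb_occ ℓ hℓ

/-- Proposition 1 of the paper: in a maximal dense pattern x, every internal solid
block b = x[i..j] (flanked by don't cares on both sides) is a maximal solid block of s:
extending b by any solid character on either side strictly decreases its frequency. -/
theorem internal_solid_block_maximal {α : Type*} (s : List α) (ρ : ℚ)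
    (hρ0 : 0 < ρ) (hρ1 : ρ ≤ 1)
    (x : List (Option α)) (hx : MaximalDense s ρ x)
    (b : List α) (i j : ℕ) (hi : 1 ≤ i) (hij : i ≤ j) (hj : j + 1 < x.length)
    (hblock : (x.drop i).take (j + 1 - i) = b.map some)
    (hleft : x.getD (i - 1) none = none) (hright : x.getD (j + 1) none = none) :
    ∀ c : α,
      freq (b.map some ++ [some c]) s < freq (b.map some) s ∧
      freq (some c :: b.map some) s < freq (b.map some) s :=
  internal_solid_block_maximal_general s ρ x hx b i j hi hij hj hblock hleft hright
end

section
/- Let x be a dense pattern (w.r.t. ρ) containing at least one don't care. Then x can be split at a don't care into two dense patterns: there exist an index s₁ with x[s₁] = ∘ (more generally a don't care block) such that the pattern obtained from x[0..s₁-1] and the pattern obtained from x[s₁+1..|x|-1], each stripped of leading/trailing don't cares, are both dense w.r.t. ρ. -/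
/-- A pattern begins and ends with a solid character. -/
def SolidEnds {α : Type*} (x : List (Option α)) : Prop :=
  x.getD 0 none ≠ none ∧ x.getD (x.length - 1) none ≠ none

/-- Strip leading and trailing don't cares from a pattern. -/
def strip {α : Type*} (x : List (Option α)) : List (Option α) :=
  ((x.dropWhile Option.isNone).reverse.dropWhile Option.isNone).reverse

/-! Write `e(y) = dc y - (1 - ρ)|y|`: for `ρ ≤ 1` a pattern is dense iff `e(y) ≤ 0`, and `e`
is additive, each don't care contributing `ρ` and each solid character `-(1 - ρ) ≤ 0`. Split `x`
at the first don't care whose suffix has `e ≤ 0` (the last don't care qualifies, its suffix being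
solid). At every earlier don't care the suffix has `e > 0`, so `e(x) ≤ 0` forces `e < 0` on the
prefix up to that don't care; hence the prefix before the chosen one has `e ≤ 0`. Stripping
removes don't cares only, so it does not increase `e`. -/

section DensityExcess

variable {α : Type*}

def densityExcess (ρ : ℚ) (y : List (Option α)) : ℚ :=
  dc y - (1 - ρ) * y.length

@[simp]
lemma dc_cons_none (y : List (Option α)) : dc (none :: y) = dc y + 1 := by
  simp [dc]

@[simp]
lemma dc_cons_some (a : α) (y : List (Option α)) : dc (some a :: y) = dc y := by
  simp [dc]

@[simp]
lemma dc_reverse (y : List (Option α)) : dc y.reverse = dc y := by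
  simp [dc, List.filter_reverse]

lemma dc_eq_zero_iff {y : List (Option α)} : dc y = 0 ↔ none ∉ y := by
  simp only [dc, List.length_eq_zero_iff, List.filter_eq_nil_iff, Option.isNone_iff_eq_none]
  exact ⟨fun h hy => h none hy rfl, fun h c hc hcn => h (hcn ▸ hc)⟩

@[simp]
lemma densityExcess_nil (ρ : ℚ) : densityExcess ρ ([] : List (Option α)) = 0 := by
  simp [densityExcess, dc]

@[simp]
lemma densityExcess_cons_none (ρ : ℚ) (y : List (Option α)) :
    densityExcess ρ (none :: y) = ρ + densityExcess ρ y := by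
  simp only [densityExcess, dc_cons_none, List.length_cons]
  push_cast
  ring

@[simp]
lemma densityExcess_cons_some (ρ : ℚ) (a : α) (y : List (Option α)) :
    densityExcess ρ (some a :: y) = densityExcess ρ y - (1 - ρ) := by
  simp only [densityExcess, dc_cons_some, List.length_cons]
  push_cast
  ring

@[simp]
lemma densityExcess_reverse (ρ : ℚ) (y : List (Option α)) :
    densityExcess ρ y.reverse = densityExcess ρ y := by
  simp [densityExcess]

/-- The empty pattern counts as dense because `density [] = 1 - 0 / 0 = 1`. -/
lemma isDense_iff_densityExcess_nonpos {ρ : ℚ} (hρ : ρ ≤ 1) (y : List (Option α)) :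
    IsDense ρ y ↔ densityExcess ρ y ≤ 0 := by
  rcases eq_or_ne y [] with rfl | hy
  · simpa [IsDense, density] using hρ
  · have hy' : (0 : ℚ) < y.length := by exact_mod_cast List.length_pos_iff.mpr hy
    rw [IsDense, density, densityExcess, le_sub_iff_add_le, ← le_sub_iff_add_le',
      div_le_iff₀ hy', sub_nonpos]

lemma densityExcess_nonpos_of_none_not_mem {ρ : ℚ} (hρ : ρ ≤ 1) {y : List (Option α)}
    (hy : none ∉ y) : densityExcess ρ y ≤ 0 := by
  rw [densityExcess, dc_eq_zero_iff.mpr hy, Nat.cast_zero, zero_sub, neg_nonpos]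
  exact mul_nonneg (sub_nonneg.mpr hρ) (Nat.cast_nonneg _)

lemma densityExcess_dropWhile_isNone_le {ρ : ℚ} (hρ : 0 ≤ ρ) (y : List (Option α)) :
    densityExcess ρ (y.dropWhile Option.isNone) ≤ densityExcess ρ y := by
  induction y with
  | nil => rfl
  | cons c y ih =>
    cases c with
    | none =>
      rw [List.dropWhile_cons_of_pos rfl, densityExcess_cons_none]
      linarith
    | some a => rw [List.dropWhile_cons_of_neg (by simp)]

lemma densityExcess_strip_le {ρ : ℚ} (hρ : 0 ≤ ρ) (y : List (Option α)) :
    densityExcess ρ (strip y) ≤ densityExcess ρ y := by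
  rw [strip, densityExcess_reverse]
  calc densityExcess ρ ((y.dropWhile Option.isNone).reverse.dropWhile Option.isNone)
      ≤ densityExcess ρ (y.dropWhile Option.isNone).reverse :=
        densityExcess_dropWhile_isNone_le hρ _
    _ ≤ densityExcess ρ y := by
        rw [densityExcess_reverse]
        exact densityExcess_dropWhile_isNone_le hρ y

lemma isDense_strip_of_densityExcess_nonpos {ρ : ℚ} (hρ0 : 0 ≤ ρ) (hρ1 : ρ ≤ 1)
    {y : List (Option α)} (hy : densityExcess ρ y ≤ 0) : IsDense ρ (strip y) :=
  (isDense_iff_densityExcess_nonpos hρ1 _).mpr ((densityExcess_strip_le hρ0 y).trans hy)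

-- `s` is the excess of whatever stands to the left of `x`.
lemma exists_eq_append_none_cons_densityExcess_nonpos {ρ : ℚ} (hρ : ρ ≤ 1) :
    ∀ (x : List (Option α)) (s : ℚ), none ∈ x → s ≤ 0 → s + densityExcess ρ x ≤ 0 →
      ∃ a b, x = a ++ none :: b ∧ s + densityExcess ρ a ≤ 0 ∧ densityExcess ρ b ≤ 0
  | [], _, hx, _, _ => absurd hx List.not_mem_nil
  | some c :: x, s, hx, hs, hsx => by
    rw [densityExcess_cons_some] at hsx
    obtain ⟨a, b, rfl, ha, hb⟩ := exists_eq_append_none_cons_densityExcess_nonpos hρ x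
      (s - (1 - ρ)) (by simpa using hx) (by linarith) (by linarith)
    exact ⟨some c :: a, b, rfl, by simp only [densityExcess_cons_some]; linarith, hb⟩
  | none :: x, s, _, hs, hsx => by
    by_cases hrest : densityExcess ρ x ≤ 0
    · exact ⟨[], x, rfl, by simpa using hs, hrest⟩
    have hx : none ∈ x := by
      by_contra hx
      exact hrest (densityExcess_nonpos_of_none_not_mem hρ hx)
    rw [densityExcess_cons_none] at hsx
    obtain ⟨a, b, rfl, ha, hb⟩ :=
      exists_eq_append_none_cons_densityExcess_nonpos hρ x (s + ρ) hx (by linarith) (by linarith)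
    exact ⟨none :: a, b, rfl, by simp only [densityExcess_cons_none]; linarith, hb⟩

end DensityExcess

theorem dense_split_at_dontcare_general {α : Type*} (ρ : ℚ) (hρ0 : 0 < ρ) (hρ1 : ρ ≤ 1)
    (x : List (Option α)) (hdc : 0 < dc x)
    (hdense : IsDense ρ x) :
    ∃ k < x.length, x.getD k none = none ∧
      IsDense ρ (strip (x.take k)) ∧ IsDense ρ (strip (x.drop (k + 1))) := by
  have hnone : none ∈ x := by
    by_contra h
    exact hdc.ne' (dc_eq_zero_iff.mpr h)
  have hx := (isDense_iff_densityExcess_nonpos hρ1 x).mp hdense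
  obtain ⟨a, b, rfl, ha, hb⟩ :=
    exists_eq_append_none_cons_densityExcess_nonpos hρ1 x 0 hnone le_rfl (by simpa using hx)
  refine ⟨a.length, by simp, by simp, ?_, ?_⟩
  · simpa using isDense_strip_of_densityExcess_nonpos hρ0.le hρ1 (by simpa using ha)
  · simpa using isDense_strip_of_densityExcess_nonpos hρ0.le hρ1 hb

/-- Decomposition step of Theorem 1: a dense pattern containing a don't care can be
split at a don't care position so that both parts, stripped of leading/trailing don't
cares, are dense. -/
theorem dense_split_at_dontcare {α : Type*} (ρ : ℚ) (hρ0 : 0 < ρ) (hρ1 : ρ ≤ 1)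
    (x : List (Option α)) (hends : SolidEnds x) (hdc : 0 < dc x)
    (hdense : IsDense ρ x) :
    ∃ k < x.length, x.getD k none = none ∧
      IsDense ρ (strip (x.take k)) ∧ IsDense ρ (strip (x.drop (k + 1))) :=
  dense_split_at_dontcare_general ρ hρ0 hρ1 x hdc hdense
end
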